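/- Under condition A (ψ^U ≤ β ψ^L for some β > 1), for all 0 < ξ₁ < ξ₂: ψ^U(ξ₂)/ψ^U(ξ₁) ≥ (ξ₂/ξ₁)^{2/β}, provided ψ^U(ξ₁) > 0. -/

import Mathlib

open MeasureTheory Real Set

/-- A Lévy measure on `ℝ`: a Borel measure with `∫ min(1, u²) μ(du) < ∞`. -/
def IsLevyMeasure (μ : Measure ℝ) : Prop :=
  ∫⁻ u, ENNReal.ofReal (min 1 (u ^ 2)) ∂μ < ⊤

/-- `ψ^L(ξ) = ∫_{|ξu|<1} (ξu)² μ(du)`. -/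
noncomputable def psiL (μ : Measure ℝ) (ξ : ℝ) : ℝ :=
  (∫⁻ u in {u : ℝ | |ξ * u| < 1}, ENNReal.ofReal ((ξ * u) ^ 2) ∂μ).toReal

/-- `ψ^U(ξ) = ∫ min((ξu)², 1) μ(du)`. -/
noncomputable def psiU (μ : Measure ℝ) (ξ : ℝ) : ℝ :=
  (∫⁻ u, ENNReal.ofReal (min ((ξ * u) ^ 2) 1) ∂μ).toReal

/-- `Re ψ(ξ) = ∫ (1 - cos(ξu)) μ(du)`. -/
noncomputable def rePsi (μ : Measure ℝ) (ξ : ℝ) : ℝ :=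
  (∫⁻ u, ENNReal.ofReal (1 - Real.cos (ξ * u)) ∂μ).toReal

/-- `ρ_t = inf{ξ > 0 : Re ψ(ξ) ≥ 1/t}`. -/
noncomputable def rho (μ : Measure ℝ) (t : ℝ) : ℝ :=
  sInf {ξ : ℝ | 0 < ξ ∧ 1 / t ≤ rePsi μ ξ}

/-!
Comparing the integrands at `ξ` and `t ξ` (`0 ≤ t ≤ 1`) gives
`ψ^U(t ξ) + (1 - t²) ψ^L(ξ) ≤ ψ^U(ξ)`, so condition A yields the one-step contraction
`ψ^U(t ξ) ≤ (1 - (1 - t²)/β) ψ^U(ξ)`. Iterating it `n` times with `t = (ξ₁/ξ₂)^(1/n)` and letting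
`n → ∞` turns the product of the factors into `(ξ₁/ξ₂)^(2/β)`; this is a discrete form of the
integral identity `ψ^U(ξ₂) - ψ^U(ξ₁) = ∫_{ξ₁}^{ξ₂} (2/η) ψ^L(η) dη` that needs no Fubini.
-/

open Filter Topology

theorem apply_pow_mul_le_pow_mul {f : ℝ → ℝ} {t c : ℝ} (hc : 0 ≤ c)
    (h : ∀ x, f (t * x) ≤ c * f x) (n : ℕ) (x : ℝ) : f (t ^ n * x) ≤ c ^ n * f x := by
  induction n with
  | zero => simp
  | succ n ih =>
    calc f (t ^ (n + 1) * x) = f (t * (t ^ n * x)) := by ring_nf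
      _ ≤ c * f (t ^ n * x) := h _
      _ ≤ c * (c ^ n * f x) := mul_le_mul_of_nonneg_left ih hc
      _ = c ^ (n + 1) * f x := by ring

theorem tendsto_nat_mul_rpow_inv_sub_one {r : ℝ} (hr : 0 < r) :
    Tendsto (fun n : ℕ ↦ n * (r ^ (n : ℝ)⁻¹ - 1)) atTop (𝓝 (log r)) := by
  have hslope := (hasStrictDerivAt_const_rpow hr 0).hasDerivAt.tendsto_slope_zero_right
  have hinv : Tendsto (fun n : ℕ ↦ (n : ℝ)⁻¹) atTop (𝓝[>] 0) :=
    tendsto_inv_atTop_nhdsGT_zero.comp tendsto_natCast_atTop_atTop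
  simpa [Function.comp_def] using hslope.comp hinv

/-- Iterate the hypothesis along `t = s ^ (1/n)`: since `1 - y ≤ exp (-y)`, this gives
`f (s * x) ≤ exp (κ * n * (s ^ (2/n) - 1)) * f x`, and the exponent tends to `2 κ log s`. -/
theorem apply_mul_le_rpow_mul {f : ℝ → ℝ} {κ : ℝ} (hκ : κ ≤ 1)
    (hf : ∀ t ∈ Icc (0 : ℝ) 1, ∀ x, f (t * x) ≤ (1 - κ * (1 - t ^ 2)) * f x)
    {s x : ℝ} (hs₀ : 0 < s) (hs₁ : s ≤ 1) (hfx : 0 ≤ f x) :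
    f (s * x) ≤ s ^ (2 * κ) * f x := by
  have hlim : Tendsto (fun n : ℕ ↦ exp (κ * (n * ((s ^ 2) ^ (n : ℝ)⁻¹ - 1))) * f x) atTop
      (𝓝 (s ^ (2 * κ) * f x)) := by
    convert ((tendsto_nat_mul_rpow_inv_sub_one (pow_pos hs₀ 2)).const_mul κ).rexp.mul_const (f x)
      using 2
    rw [rpow_def_of_pos hs₀, log_pow]
    push_cast
    ring_nf
  refine ge_of_tendsto hlim (eventually_atTop.2 ⟨1, fun n hn ↦ ?_⟩)
  obtain ⟨t, ht⟩ : ∃ t, s ^ (n : ℝ)⁻¹ = t := ⟨_, rfl⟩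
  have ht₀ : 0 ≤ t := ht ▸ by positivity
  have ht₁ : t ≤ 1 := ht ▸ rpow_le_one hs₀.le hs₁ (by positivity)
  have htn : t ^ n = s := by
    rw [← ht, ← rpow_natCast, ← rpow_mul hs₀.le, inv_mul_cancel₀ (by positivity), rpow_one]
  have hc : 0 ≤ 1 - κ * (1 - t ^ 2) := by
    nlinarith [mul_nonneg (sub_nonneg.2 (pow_le_one₀ ht₀ ht₁ : t ^ 2 ≤ 1)) (sub_nonneg.2 hκ)]
  calc f (s * x) = f (t ^ n * x) := by rw [htn]
    _ ≤ (1 - κ * (1 - t ^ 2)) ^ n * f x := apply_pow_mul_le_pow_mul hc (hf t ⟨ht₀, ht₁⟩) n x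
    _ ≤ exp (-(κ * (1 - t ^ 2))) ^ n * f x := by gcongr; exact one_sub_le_exp_neg _
    _ = exp (κ * (n * ((s ^ 2) ^ (n : ℝ)⁻¹ - 1))) * f x := by
      rw [← rpow_pow_comm hs₀.le, ht, ← exp_nat_mul]
      ring_nf

theorem min_mul_sq_one_le (ξ u : ℝ) : min ((ξ * u) ^ 2) 1 ≤ max (ξ ^ 2) 1 * min 1 (u ^ 2) := by
  rw [mul_min_of_nonneg _ _ (by positivity), mul_one, min_comm]
  gcongr
  · exact le_max_right _ _
  · rw [mul_pow]
    exact mul_le_mul_of_nonneg_right (le_max_left _ _) (sq_nonneg u)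

theorem IsLevyMeasure.lintegral_min_sq_lt_top {μ : Measure ℝ} (hμ : IsLevyMeasure μ) (ξ : ℝ) :
    ∫⁻ u, ENNReal.ofReal (min ((ξ * u) ^ 2) 1) ∂μ < ⊤ :=
  calc ∫⁻ u, ENNReal.ofReal (min ((ξ * u) ^ 2) 1) ∂μ
      ≤ ∫⁻ u, ENNReal.ofReal (max (ξ ^ 2) 1) * ENNReal.ofReal (min 1 (u ^ 2)) ∂μ :=
        lintegral_mono fun u ↦ by
          rw [← ENNReal.ofReal_mul (by positivity)]
          exact ENNReal.ofReal_le_ofReal (min_mul_sq_one_le ξ u)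
    _ = ENNReal.ofReal (max (ξ ^ 2) 1) * ∫⁻ u, ENNReal.ofReal (min 1 (u ^ 2)) ∂μ :=
        lintegral_const_mul' _ _ ENNReal.ofReal_ne_top
    _ < ⊤ := ENNReal.mul_lt_top ENNReal.ofReal_lt_top hμ

theorem psiU_mul_add_psiL_le {μ : Measure ℝ} (hμ : IsLevyMeasure μ) {t : ℝ} (ht₀ : 0 ≤ t)
    (ht₁ : t ≤ 1) (ξ : ℝ) : psiU μ (t * ξ) + (1 - t ^ 2) * psiL μ ξ ≤ psiU μ ξ := by
  set S := {u : ℝ | |ξ * u| < 1}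
  have hS : MeasurableSet S := measurableSet_lt (by fun_prop) measurable_const
  have ht2 : t ^ 2 ≤ 1 := pow_le_one₀ ht₀ ht₁
  have hpt : ∀ u, ENNReal.ofReal (min ((t * ξ * u) ^ 2) 1)
      + ENNReal.ofReal (1 - t ^ 2) * S.indicator (fun u ↦ ENNReal.ofReal ((ξ * u) ^ 2)) u
      ≤ ENNReal.ofReal (min ((ξ * u) ^ 2) 1) := by
    intro u
    have hsq : (t * ξ * u) ^ 2 = t ^ 2 * (ξ * u) ^ 2 := by ring
    by_cases hu : u ∈ S
    · have h1 : (ξ * u) ^ 2 < 1 := (sq_lt_one_iff_abs_lt_one _).2 hu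
      rw [indicator_of_mem hu, ← ENNReal.ofReal_mul (by linarith),
        ← ENNReal.ofReal_add (by positivity) (by nlinarith)]
      apply ENNReal.ofReal_le_ofReal
      rw [hsq, min_eq_left (by nlinarith), min_eq_left h1.le]
      nlinarith
    · rw [indicator_of_notMem hu, mul_zero, add_zero]
      apply ENNReal.ofReal_le_ofReal
      rw [hsq]
      gcongr
      nlinarith [sq_nonneg (ξ * u)]
  have hle : ∫⁻ u, ENNReal.ofReal (min ((t * ξ * u) ^ 2) 1) ∂μ
      + ENNReal.ofReal (1 - t ^ 2) * ∫⁻ u in S, ENNReal.ofReal ((ξ * u) ^ 2) ∂μ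
      ≤ ∫⁻ u, ENNReal.ofReal (min ((ξ * u) ^ 2) 1) ∂μ := by
    rw [← lintegral_indicator hS, ← lintegral_const_mul' _ _ ENNReal.ofReal_ne_top,
      ← lintegral_add_left (by fun_prop)]
    exact lintegral_mono hpt
  have hfin := hμ.lintegral_min_sq_lt_top
  have hL : ENNReal.ofReal (1 - t ^ 2) * ∫⁻ u in S, ENNReal.ofReal ((ξ * u) ^ 2) ∂μ ≠ ⊤ :=
    ne_top_of_le_ne_top (hfin ξ).ne (le_add_self.trans hle)
  have := ENNReal.toReal_mono (hfin ξ).ne hle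
  rwa [ENNReal.toReal_add (hfin _).ne hL, ENNReal.toReal_mul,
    ENNReal.toReal_ofReal (by linarith)] at this

theorem psiU_mul_le {μ : Measure ℝ} (hμ : IsLevyMeasure μ) {β : ℝ} (hβ : 0 < β)
    (hA : ∀ ξ, psiU μ ξ ≤ β * psiL μ ξ) {t : ℝ} (ht₀ : 0 ≤ t) (ht₁ : t ≤ 1) (ξ : ℝ) :
    psiU μ (t * ξ) ≤ (1 - β⁻¹ * (1 - t ^ 2)) * psiU μ ξ := by
  have hL : β⁻¹ * psiU μ ξ ≤ psiL μ ξ := (inv_mul_le_iff₀ hβ).2 (hA ξ)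
  have ht2 : 0 ≤ 1 - t ^ 2 := sub_nonneg.2 (pow_le_one₀ ht₀ ht₁)
  nlinarith [psiU_mul_add_psiL_le hμ ht₀ ht₁ ξ, mul_le_mul_of_nonneg_left hL ht2]

theorem psiU_ratio_lower_general (μ : Measure ℝ) (hμ : IsLevyMeasure μ)
    (β : ℝ) (hβ : 1 < β)
    (hA : ∀ ξ : ℝ, psiU μ ξ ≤ β * psiL μ ξ)
    (ξ₁ ξ₂ : ℝ) (h₁ : 0 < ξ₁) (h₂ : ξ₁ < ξ₂) (hpos : 0 < psiU μ ξ₁) :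
    (ξ₂ / ξ₁) ^ (2 / β) ≤ psiU μ ξ₂ / psiU μ ξ₁ := by
  have hs₀ : 0 < ξ₁ / ξ₂ := div_pos h₁ (h₁.trans h₂)
  have hs₁ : ξ₁ / ξ₂ ≤ 1 := (div_le_one (h₁.trans h₂)).2 h₂.le
  have hpow := apply_mul_le_rpow_mul (inv_le_one_of_one_le₀ hβ.le)
    (fun t ht ↦ psiU_mul_le hμ (zero_lt_one.trans hβ) hA ht.1 ht.2) hs₀ hs₁
    (ENNReal.toReal_nonneg : 0 ≤ psiU μ ξ₂)
  rw [div_mul_cancel₀ _ (h₁.trans h₂).ne', ← div_eq_mul_inv] at hpow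
  rw [le_div_iff₀ hpos, ← inv_div, inv_rpow hs₀.le, inv_mul_le_iff₀ (rpow_pos_of_pos hs₀ _)]
  exact hpow

/-- Under condition A, `ψ^U(ξ₂)/ψ^U(ξ₁) ≥ (ξ₂/ξ₁)^{2/β}` whenever `0 < ξ₁ < ξ₂`
and `ψ^U(ξ₁) > 0`. -/
theorem psiU_ratio_lower (μ : Measure ℝ) (hμ : IsLevyMeasure μ)
    (hinf : μ Set.univ = ⊤) (β : ℝ) (hβ : 1 < β)
    (hA : ∀ ξ : ℝ, psiU μ ξ ≤ β * psiL μ ξ)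
    (ξ₁ ξ₂ : ℝ) (h₁ : 0 < ξ₁) (h₂ : ξ₁ < ξ₂) (hpos : 0 < psiU μ ξ₁) :
    (ξ₂ / ξ₁) ^ (2 / β) ≤ psiU μ ξ₂ / psiU μ ξ₁ :=
  psiU_ratio_lower_general μ hμ β hβ hA ξ₁ ξ₂ h₁ h₂ hpos
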